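/- Let C ⊆ ℝ² be a nonempty closed convex set. Then C is approximately M-decomposable if and only if C is hyperbolic. -/

import Mathlib

open scoped InnerProductSpace Pointwise ENNReal
open Metric Filter

/-- The support function `σ_C(d) = sup_{x ∈ C} ⟪d, x⟫` of a set `C ⊆ ℝⁿ`,
with values in the extended reals. -/
noncomputable def suppFun {n : ℕ} (C : Set (EuclideanSpace ℝ (Fin n)))
    (d : EuclideanSpace ℝ (Fin n)) : EReal :=
  ⨆ x ∈ C, ((⟪d, x⟫_ℝ : ℝ) : EReal)

/-- The effective domain `dom σ_C = {d : σ_C(d) < +∞}` of the support function. -/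
def suppDom {n : ℕ} (C : Set (EuclideanSpace ℝ (Fin n))) :
    Set (EuclideanSpace ℝ (Fin n)) :=
  {d | suppFun C d < ⊤}

/-- The recession cone `rec C` of a set `C`. -/
def recCone {n : ℕ} (C : Set (EuclideanSpace ℝ (Fin n))) :
    Set (EuclideanSpace ℝ (Fin n)) :=
  {y | ∀ x ∈ C, ∀ t : ℝ, 0 ≤ t → x + t • y ∈ C}

/-- The truncation `C_r = (C ∩ rB) + rec C` of `C` of radius `r`. -/
def trunc {n : ℕ} (C : Set (EuclideanSpace ℝ (Fin n))) (r : ℝ) :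
    Set (EuclideanSpace ℝ (Fin n)) :=
  (C ∩ closedBall 0 r) + recCone C

/-- `C` is approximately M-decomposable: for every `ε > 0` there is `r > 0`
with `C ⊆ C_r + εB`. -/
def ApproxMDecomposable {n : ℕ} (C : Set (EuclideanSpace ℝ (Fin n))) : Prop :=
  ∀ ε > (0 : ℝ), ∃ r > (0 : ℝ), C ⊆ trunc C r + closedBall 0 ε

/-- `C` is M-decomposable: `C = M + rec C` for some compact convex `M`. -/
def MDecomposable {n : ℕ} (C : Set (EuclideanSpace ℝ (Fin n))) : Prop :=
  ∃ M : Set (EuclideanSpace ℝ (Fin n)), IsCompact M ∧ Convex ℝ M ∧ C = M + recCone C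

/-- `C` is hyperbolic: `C ⊆ M + rec C` for some compact convex `M`. -/
def Hyperbolic {n : ℕ} (C : Set (EuclideanSpace ℝ (Fin n))) : Prop :=
  ∃ M : Set (EuclideanSpace ℝ (Fin n)), IsCompact M ∧ Convex ℝ M ∧ C ⊆ M + recCone C

/-- The polar cone `K° = {d : ⟪d, x⟫ ≤ 0 for all x ∈ K}` of a cone `K`. -/
def polarCone {n : ℕ} (K : Set (EuclideanSpace ℝ (Fin n))) :
    Set (EuclideanSpace ℝ (Fin n)) :=
  {d | ∀ x ∈ K, ⟪d, x⟫_ℝ ≤ 0}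

/-!
If `C ⊆ C_r + B`, then `C ⊆ (r + 1)B + rec C`, so approximately M-decomposable sets are
hyperbolic. Conversely, separating a point of `C` outside the closed convex set `C_r + εB` yields
a unit vector `d` of the polar cone `P` of `rec C` along which `C` reaches `ε` beyond `C ∩ rB`.
Hence it suffices that the support functions of the sets `C ∩ rB` converge to that of `C`
uniformly on the compact set of unit vectors of `P`. Hyperbolicity bounds the support function of
`C` by `R ‖d‖` on `P`, so writing `d ∈ P` near a unit vector `d₀ ∈ P` as `β d₀ + (d - β d₀)` with
`β` close to `1` gives this convergence near `d₀`, provided `d - β d₀ ∈ P`. In the plane that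
holds for every convex cone, since near `d₀` such a cone is cut out by at most two half-planes.
-/

open Set Topology Module

section InnerProductSpace

variable {E : Type*} [NormedAddCommGroup E] [InnerProductSpace ℝ E]

/-- A circular cone in `ℝ³` (the polar cone of the recession cone of a circular cone) fails this
at its boundary rays; this is where the proof needs the plane. -/
def ShiftStableAt (P : Set E) (d₀ : E) : Prop :=
  ∀ β : ℝ, β < 1 → ∀ᶠ d in 𝓝[P] d₀, d - β • d₀ ∈ P

theorem exists_mem_eventually_inner_lt_add {C P : Set E} {R : ℝ} (hR₀ : 0 ≤ R)
    (hR : ∀ d ∈ P, ∀ x ∈ C, ⟪d, x⟫_ℝ ≤ R * ‖d‖) (hne : C.Nonempty) {d₀ : E} (hd₀ : d₀ ∈ P)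
    (hnorm : ‖d₀‖ = 1) (hshift : ShiftStableAt P d₀) {ε : ℝ} (hε : 0 < ε) :
    ∃ c ∈ C, ∀ᶠ d in 𝓝[P] d₀, ∀ x ∈ C, ⟪d, x⟫_ℝ < ⟪d, c⟫_ℝ + ε := by
  set S := (fun x => ⟪d₀, x⟫_ℝ) '' C
  have hbdd : BddAbove S := ⟨R, by rintro _ ⟨x, hx, rfl⟩; simpa [hnorm] using hR d₀ hd₀ x hx⟩
  obtain ⟨_, ⟨c, hc, rfl⟩, hcsup⟩ :=
    exists_lt_of_lt_csSup (hne.image _) (sub_lt_self (sSup S) (half_pos hε))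
  have hnear : ∀ x ∈ C, ⟪d₀, x⟫_ℝ < ⟪d₀, c⟫_ℝ + ε / 2 := fun x hx => by
    linarith [le_csSup hbdd (mem_image_of_mem _ hx)]
  set K := R + ‖c‖
  set θ := min 1 (ε / (4 * (K + 1)))
  have hθ : 0 < θ := lt_min one_pos (by positivity)
  have hθK : θ * (4 * (K + 1)) ≤ ε := (le_div_iff₀ (by positivity)).1 (min_le_right _ _)
  refine ⟨c, hc, ?_⟩
  filter_upwards [hshift (1 - θ) (by linarith),
    nhdsWithin_le_nhds (ball_mem_nhds d₀ hθ)] with d hv hd x hx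
  set v := d - (1 - θ) • d₀
  have hvnorm : ‖v‖ < 2 * θ :=
    calc ‖v‖ = ‖(d - d₀) + θ • d₀‖ := by congr 1; module
      _ ≤ ‖d - d₀‖ + θ := (norm_add_le _ _).trans_eq <| by
        rw [norm_smul, hnorm, mul_one, Real.norm_of_nonneg hθ.le]
      _ < 2 * θ := by rw [mem_ball, dist_eq_norm] at hd; linarith
  have hsplit : ⟪d, x⟫_ℝ - ⟪d, c⟫_ℝ
      = (1 - θ) * (⟪d₀, x⟫_ℝ - ⟪d₀, c⟫_ℝ) + (⟪v, x⟫_ℝ - ⟪v, c⟫_ℝ) := by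
    simp only [v, inner_sub_left, real_inner_smul_left]; ring
  have hmain : (1 - θ) * (⟪d₀, x⟫_ℝ - ⟪d₀, c⟫_ℝ) ≤ ε / 2 := by
    nlinarith [hnear x hx, min_le_left 1 (ε / (4 * (K + 1)))]
  have hrest : ⟪v, x⟫_ℝ - ⟪v, c⟫_ℝ ≤ K * ‖v‖ := by
    have := neg_le_of_abs_le (abs_real_inner_le_norm v c)
    nlinarith [hR v hv x hx]
  nlinarith [norm_nonneg c, norm_nonneg v]

theorem exists_radius_forall_inner_lt_add [ProperSpace E] {C P : Set E} {R : ℝ} (hR₀ : 0 ≤ R)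
    (hR : ∀ d ∈ P, ∀ x ∈ C, ⟪d, x⟫_ℝ ≤ R * ‖d‖) (hne : C.Nonempty) (hP : IsClosed P)
    (hshift : ∀ d₀ ∈ P, ‖d₀‖ = 1 → ShiftStableAt P d₀) {ε : ℝ} (hε : 0 < ε) :
    ∃ r, ∀ d ∈ P ∩ sphere 0 1, ∀ x ∈ C, ∃ c ∈ C, ‖c‖ ≤ r ∧ ⟪d, x⟫_ℝ < ⟪d, c⟫_ℝ + ε := by
  refine (isCompact_sphere (0 : E) 1).inter_left hP |>.induction_on ?_ ?_ ?_ ?_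
  · exact ⟨0, by simp⟩
  · rintro s t hst ⟨r, hr⟩
    exact ⟨r, fun d hd => hr d (hst hd)⟩
  · rintro s t ⟨r, hr⟩ ⟨r', hr'⟩
    refine ⟨max r r', fun d hd x hx => ?_⟩
    rcases hd with hd | hd
    · obtain ⟨c, hc, hcr, hlt⟩ := hr d hd x hx
      exact ⟨c, hc, hcr.trans (le_max_left _ _), hlt⟩
    · obtain ⟨c, hc, hcr, hlt⟩ := hr' d hd x hx
      exact ⟨c, hc, hcr.trans (le_max_right _ _), hlt⟩
  · rintro d₀ ⟨hd₀, hnorm⟩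
    rw [mem_sphere_zero_iff_norm] at hnorm
    obtain ⟨c, hc, hev⟩ :=
      exists_mem_eventually_inner_lt_add hR₀ hR hne hd₀ hnorm (hshift d₀ hd₀ hnorm) hε
    exact ⟨_, nhdsWithin_mono _ inter_subset_left hev, ‖c‖,
      fun d hd x hx => ⟨c, hc, le_rfl, hd x hx⟩⟩

theorem exists_norm_eq_one_inner_lt_of_notMem [CompleteSpace E] {D : Set E} {x : E}
    (hD : Convex ℝ D) (hDc : IsClosed D) (hne : D.Nonempty) (hx : x ∉ D) :
    ∃ d, ‖d‖ = 1 ∧ ∀ y ∈ D, ⟪d, y⟫_ℝ < ⟪d, x⟫_ℝ := by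
  obtain ⟨f, u, hfD, hfx⟩ := geometric_hahn_banach_closed_point hD hDc hx
  set w := (InnerProductSpace.toDual ℝ E).symm f
  have hw : ∀ y, ⟪w, y⟫_ℝ = f y := fun y => InnerProductSpace.toDual_symm_apply
  have hlt : ∀ y ∈ D, ⟪w, y⟫_ℝ < ⟪w, x⟫_ℝ := fun y hy => by
    rw [hw, hw]; exact (hfD y hy).trans hfx
  obtain ⟨y, hy⟩ := hne
  have hw0 : w ≠ 0 := by rintro h; simpa [h] using hlt y hy
  refine ⟨‖w‖⁻¹ • w, ?_, fun z hz => ?_⟩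
  · rw [norm_smul, norm_inv, norm_norm, inv_mul_cancel₀ (norm_ne_zero_iff.2 hw0)]
  · simp only [real_inner_smul_left]
    exact mul_lt_mul_of_pos_left (hlt z hz) (by positivity)

theorem PointedCone.eventually_sub_smul_mem_of_inner_nonneg (P : PointedCone ℝ E) {d₀ s : E}
    (hd₀ : d₀ ∈ P) (hnorm : ‖d₀‖ = 1) (hs : ⟪s, d₀⟫_ℝ = 0)
    (hdecomp : ∀ x, x = ⟪d₀, x⟫_ℝ • d₀ + ⟪s, x⟫_ℝ • s) {β : ℝ} (hβ : β < 1) :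
    ∀ᶠ d in 𝓝 d₀, d ∈ P → 0 ≤ ⟪s, d⟫_ℝ → d - β • d₀ ∈ P := by
  have hinner : Tendsto (fun d => ⟪d₀, d⟫_ℝ) (𝓝 d₀) (𝓝 1) := by
    simpa [real_inner_self_eq_norm_sq, hnorm] using
      ((continuous_const.inner continuous_id).tendsto d₀ : Tendsto (fun d => ⟪d₀, d⟫_ℝ) _ _)
  -- Either `P` contains the sector between `d₀` and some `d₀ + t s`, or no point of `P` lies
  -- strictly on the `s`-side of the line `ℝ d₀`.
  by_cases hside : ∃ t : ℝ, 0 < t ∧ d₀ + t • s ∈ P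
  · obtain ⟨t, ht, hmem⟩ := hside
    have hlim : Tendsto (fun d => t * (⟪d₀, d⟫_ℝ - β) - ⟪s, d⟫_ℝ) (𝓝 d₀)
        (𝓝 (t * (1 - β))) := by
      simpa [hs] using ((hinner.sub_const β).const_mul t).sub
        ((continuous_const.inner continuous_id).tendsto d₀ : Tendsto (fun d => ⟪s, d⟫_ℝ) _ _)
    filter_upwards [hlim.eventually_const_lt (by nlinarith : (0 : ℝ) < t * (1 - β))]
      with d hd _ hsd
    have hcomb : d - β • d₀ = (⟪d₀, d⟫_ℝ - β - ⟪s, d⟫_ℝ / t) • d₀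
        + (⟪s, d⟫_ℝ / t) • (d₀ + t • s) := by
      conv_lhs => rw [hdecomp d]
      rw [smul_add, smul_smul, div_mul_cancel₀ _ ht.ne']
      module
    rw [hcomb]
    refine P.add_mem (P.smul_mem ?_ hd₀) (P.smul_mem (by positivity) hmem)
    rw [sub_sub, sub_nonneg, ← le_sub_iff_add_le', div_le_iff₀ ht]
    linarith
  · simp only [not_exists, not_and] at hside
    filter_upwards [hinner.eventually_const_lt (max_lt hβ one_pos)] with d hd hdP hsd
    have ha : 0 < ⟪d₀, d⟫_ℝ := (le_max_right _ _).trans_lt hd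
    have hsd0 : ⟪s, d⟫_ℝ = 0 := by
      refine le_antisymm (not_lt.1 fun hpos => hside _ (div_pos hpos ha) ?_) hsd
      have hscale : d₀ + (⟪s, d⟫_ℝ / ⟪d₀, d⟫_ℝ) • s
          = (⟪d₀, d⟫_ℝ)⁻¹ • (⟪d₀, d⟫_ℝ • d₀ + ⟪s, d⟫_ℝ • s) := by
        rw [smul_add, smul_smul, smul_smul, inv_mul_cancel₀ ha.ne', one_smul, div_eq_inv_mul]
      rw [hscale, ← hdecomp d]
      exact P.smul_mem (inv_nonneg.2 ha.le) hdP
    rw [hdecomp d, hsd0, zero_smul, add_zero, ← sub_smul]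
    exact P.smul_mem (sub_nonneg.2 ((le_max_left _ _).trans hd.le)) hd₀

section Plane

variable [Fact (finrank ℝ E = 2)]

theorem Orientation.eq_inner_smul_add_inner_smul_rightAngleRotation
    (o : Orientation ℝ E (Fin 2)) {a : E} (ha : ‖a‖ = 1) (x : E) :
    x = ⟪a, x⟫_ℝ • a + ⟪o.rightAngleRotation a, x⟫_ℝ • o.rightAngleRotation a := by
  refine ext_inner_right ℝ fun y => ?_
  rw [inner_add_left, real_inner_smul_left, real_inner_smul_left,
    o.inner_rightAngleRotation_left, o.inner_rightAngleRotation_left,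
    o.inner_mul_inner_add_areaForm_mul_areaForm, ha, one_pow, one_mul]

theorem PointedCone.shiftStableAt (P : PointedCone ℝ E) {d₀ : E}
    (hd₀ : d₀ ∈ P) (hnorm : ‖d₀‖ = 1) : ShiftStableAt (P : Set E) d₀ := by
  intro β hβ
  have : FiniteDimensional ℝ E := .of_fact_finrank_eq_two
  let o : Orientation ℝ E (Fin 2) := (finBasisOfFinrankEq ℝ E Fact.out).orientation
  set J := o.rightAngleRotation d₀
  have hJ : ⟪J, d₀⟫_ℝ = 0 := o.inner_rightAngleRotation_self d₀
  have hdecomp := o.eq_inner_smul_add_inner_smul_rightAngleRotation hnorm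
  rw [eventually_nhdsWithin_iff]
  filter_upwards [P.eventually_sub_smul_mem_of_inner_nonneg hd₀ hnorm hJ hdecomp hβ,
    P.eventually_sub_smul_mem_of_inner_nonneg (s := -J) (β := β) hd₀ hnorm
      (by rw [inner_neg_left, hJ, neg_zero])
      (fun x => by rw [inner_neg_left, neg_smul_neg]; exact hdecomp x) hβ] with d hpos hneg hdP
  rcases le_total 0 ⟪J, d⟫_ℝ with h | h
  · exact hpos hdP h
  · exact hneg hdP (by rw [inner_neg_left]; linarith)

end Plane

end InnerProductSpace

section Euclidean

variable {n : ℕ} {C : Set (EuclideanSpace ℝ (Fin n))}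

theorem zero_mem_recCone : (0 : EuclideanSpace ℝ (Fin n)) ∈ recCone C :=
  fun x hx _ _ => by simpa using hx

theorem smul_mem_recCone {k : EuclideanSpace ℝ (Fin n)} (hk : k ∈ recCone C) {t : ℝ}
    (ht : 0 ≤ t) : t • k ∈ recCone C := fun x hx s hs => by
  simpa [smul_smul] using hk x hx (s * t) (mul_nonneg hs ht)

theorem convex_recCone (hconv : Convex ℝ C) : Convex ℝ (recCone C) := by
  intro y₁ h₁ y₂ h₂ a b ha hb hab x hx t ht
  have e : x + t • (a • y₁ + b • y₂) = a • (x + t • y₁) + b • (x + t • y₂) := by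
    linear_combination (norm := module) -hab • x
  rw [e]
  exact hconv (h₁ x hx t ht) (h₂ x hx t ht) ha hb hab

theorem isClosed_recCone (hcl : IsClosed C) : IsClosed (recCone C) := by
  have he : recCone C = ⋂ x ∈ C, ⋂ t ∈ Ici (0 : ℝ), (fun y => x + t • y) ⁻¹' C := by
    ext y; simp [recCone]
  rw [he]
  exact isClosed_biInter fun x _ => isClosed_biInter fun t _ =>
    hcl.preimage (continuous_const.add (continuous_const_smul t))

theorem isClosed_polarCone (K : Set (EuclideanSpace ℝ (Fin n))) : IsClosed (polarCone K) := by
  have he : polarCone K = ⋂ x ∈ K, {d | ⟪d, x⟫_ℝ ≤ 0} := by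
    ext d; simp [polarCone]
  rw [he]
  exact isClosed_biInter fun x _ => isClosed_le (continuous_id.inner continuous_const)
    continuous_const

def polarPointedCone (K : Set (EuclideanSpace ℝ (Fin n))) :
    PointedCone ℝ (EuclideanSpace ℝ (Fin n)) where
  carrier := polarCone K
  add_mem' {d d'} hd hd' x hx := by
    rw [inner_add_left]; linarith [hd x hx, hd' x hx]
  zero_mem' x _ := by simp
  smul_mem' c d hd x hx := by
    change ⟪(c : ℝ) • d, x⟫_ℝ ≤ 0
    rw [real_inner_smul_left]
    exact mul_nonpos_of_nonneg_of_nonpos c.2 (hd x hx)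

theorem convex_trunc_add_closedBall (hconv : Convex ℝ C) (r ε : ℝ) :
    Convex ℝ (trunc C r + closedBall 0 ε) :=
  ((hconv.inter (convex_closedBall _ _)).add (convex_recCone hconv)).add (convex_closedBall _ _)

theorem isClosed_trunc_add_closedBall (hcl : IsClosed C) (r ε : ℝ) :
    IsClosed (trunc C r + closedBall 0 ε) := by
  rw [trunc, add_right_comm]
  exact (isClosed_recCone hcl).add_left_of_isCompact
    (((isCompact_closedBall _ _).inter_left hcl).add (isCompact_closedBall _ _))

theorem ApproxMDecomposable.hyperbolic (h : ApproxMDecomposable C) : Hyperbolic C := by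
  obtain ⟨r, -, hsub⟩ := h 1 one_pos
  refine ⟨closedBall 0 (r + 1), isCompact_closedBall _ _, convex_closedBall _ _, fun x hx => ?_⟩
  obtain ⟨_, ⟨c, ⟨-, hcr⟩, k, hk, rfl⟩, b, hb, rfl⟩ := hsub hx
  refine ⟨c + b, ?_, k, hk, add_right_comm c b k⟩
  rw [mem_closedBall_zero_iff] at *
  exact (norm_add_le _ _).trans (add_le_add hcr hb)

theorem Hyperbolic.exists_inner_le (h : Hyperbolic C) :
    ∃ R, 0 ≤ R ∧ ∀ d ∈ polarCone (recCone C), ∀ x ∈ C, ⟪d, x⟫_ℝ ≤ R * ‖d‖ := by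
  obtain ⟨M, hM, -, hCM⟩ := h
  obtain ⟨R, hR₀, hR⟩ := hM.isBounded.exists_pos_norm_le
  refine ⟨R, hR₀.le, fun d hd x hx => ?_⟩
  obtain ⟨m, hm, k, hk, rfl⟩ := hCM hx
  calc ⟪d, m + k⟫_ℝ = ⟪d, m⟫_ℝ + ⟪d, k⟫_ℝ := inner_add_right _ _ _
    _ ≤ ‖d‖ * ‖m‖ + 0 := add_le_add (real_inner_le_norm _ _) (hd k hk)
    _ ≤ R * ‖d‖ := by nlinarith [hR m hm, norm_nonneg d]

theorem exists_mem_polarCone_inner_add_lt_of_notMem_trunc (hcl : IsClosed C) (hconv : Convex ℝ C)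
    {x₀ x : EuclideanSpace ℝ (Fin n)} {r ε : ℝ} (hx₀ : x₀ ∈ C) (hx₀r : ‖x₀‖ ≤ r) (hε : 0 ≤ ε)
    (hx : x ∉ trunc C r + closedBall 0 ε) :
    ∃ d ∈ polarCone (recCone C), ‖d‖ = 1 ∧ ∀ c ∈ C, ‖c‖ ≤ r → ⟪d, c⟫_ℝ + ε < ⟪d, x⟫_ℝ := by
  have hmem : ∀ c ∈ C, ‖c‖ ≤ r → ∀ k ∈ recCone C, ∀ b, ‖b‖ ≤ ε →
      c + k + b ∈ trunc C r + closedBall 0 ε := fun c hc hcr k hk b hb =>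
    add_mem_add (add_mem_add ⟨hc, mem_closedBall_zero_iff.2 hcr⟩ hk) (mem_closedBall_zero_iff.2 hb)
  have hx₀mem : x₀ + 0 + 0 ∈ trunc C r + closedBall 0 ε :=
    hmem x₀ hx₀ hx₀r 0 zero_mem_recCone 0 (by simpa using hε)
  obtain ⟨d, hd, hsep⟩ := exists_norm_eq_one_inner_lt_of_notMem
    (convex_trunc_add_closedBall hconv r ε) (isClosed_trunc_add_closedBall hcl r ε) ⟨_, hx₀mem⟩ hx
  refine ⟨d, fun k hk => ?_, hd, fun c hc hcr => ?_⟩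
  · by_contra! hpos
    have hgap : 0 ≤ (⟪d, x⟫_ℝ - ⟪d, x₀⟫_ℝ) / ⟪d, k⟫_ℝ := by
      have := hsep _ hx₀mem
      rw [add_zero, add_zero] at this
      exact div_nonneg (by linarith) hpos.le
    have := hsep _ (hmem x₀ hx₀ hx₀r _ (smul_mem_recCone hk hgap) 0 (by simpa using hε))
    rw [add_zero, inner_add_right, real_inner_smul_right, div_mul_cancel₀ _ hpos.ne'] at this
    linarith
  · have := hsep _ (hmem c hc hcr 0 zero_mem_recCone (ε • d) (by
      rw [norm_smul, hd, mul_one, Real.norm_of_nonneg hε]))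
    rwa [add_zero, inner_add_right, real_inner_smul_right, real_inner_self_eq_norm_sq, hd, one_pow,
      mul_one] at this

theorem approxMDecomposable_of_forall_exists_radius (hne : C.Nonempty) (hcl : IsClosed C)
    (hconv : Convex ℝ C)
    (h : ∀ ε > 0, ∃ r, ∀ d ∈ polarCone (recCone C) ∩ sphere 0 1, ∀ x ∈ C,
      ∃ c ∈ C, ‖c‖ ≤ r ∧ ⟪d, x⟫_ℝ < ⟪d, c⟫_ℝ + ε) :
    ApproxMDecomposable C := by
  intro ε hε
  obtain ⟨x₀, hx₀⟩ := hne
  obtain ⟨r, hr⟩ := h ε hε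
  refine ⟨max r ‖x₀‖ + 1, by positivity, fun x hx => ?_⟩
  by_contra hxr
  obtain ⟨d, hdP, hd, hsep⟩ := exists_mem_polarCone_inner_add_lt_of_notMem_trunc hcl hconv hx₀
    ((le_max_right _ _).trans (le_add_of_nonneg_right zero_le_one)) hε.le hxr
  obtain ⟨c, hc, hcr, hlt⟩ := hr d ⟨hdP, mem_sphere_zero_iff_norm.2 hd⟩ x hx
  linarith [hsep c hc (hcr.trans ((le_max_left _ _).trans (le_add_of_nonneg_right zero_le_one)))]

theorem Hyperbolic.approxMDecomposable_of_shiftStableAt (hH : Hyperbolic C) (hne : C.Nonempty)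
    (hcl : IsClosed C) (hconv : Convex ℝ C)
    (hshift : ∀ d₀ ∈ polarCone (recCone C), ‖d₀‖ = 1 → ShiftStableAt (polarCone (recCone C)) d₀) :
    ApproxMDecomposable C := by
  obtain ⟨R, hR₀, hR⟩ := hH.exists_inner_le
  exact approxMDecomposable_of_forall_exists_radius hne hcl hconv fun ε hε =>
    exists_radius_forall_inner_lt_add hR₀ hR hne (isClosed_polarCone _) hshift hε

end Euclidean

/-- in the plane, `C` is approximately M-decomposable if and only
if it is hyperbolic. -/
theorem approxMDecomposable_iff_hyperbolic_dim_two
    (C : Set (EuclideanSpace ℝ (Fin 2)))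
    (hne : C.Nonempty) (hcl : IsClosed C) (hconv : Convex ℝ C) :
    ApproxMDecomposable C ↔ Hyperbolic C := by
  have : Fact (finrank ℝ (EuclideanSpace ℝ (Fin 2)) = 2) := ⟨finrank_euclideanSpace_fin⟩
  refine ⟨ApproxMDecomposable.hyperbolic, fun hH => ?_⟩
  exact hH.approxMDecomposable_of_shiftStableAt hne hcl hconv fun d₀ hd₀ hnorm =>
    (polarPointedCone (recCone C)).shiftStableAt hd₀ hnorm
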